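/- Let κ be an infinite cardinal. Assume that X is a regular (T3, including T1) topological space such that t(X) ≤ κ and every open cover of X of size at most 2^κ admits a subcover of size at most κ. Then every open cover of X admits a subcover of size at most κ, i.e. ℓ(X) ≤ κ. -/

import Mathlib

open Set Cardinal Topology

universe u v

/-- A space is quasi-Lindelöf if every open cover has a countable subcover
(no separation axioms assumed). -/
def QuasiLindelofSp (X : Type u) [TopologicalSpace X] : Prop :=
  ∀ 𝒰 : Set (Set X), (∀ U ∈ 𝒰, IsOpen U) → ⋃₀ 𝒰 = Set.univ →
    ∃ 𝒱 ⊆ 𝒰, 𝒱.Countable ∧ ⋃₀ 𝒱 = Set.univ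

/-- Lindelöf in the sense of Engelking: regular (T3, including T1) and
every open cover has a countable subcover. -/
def EngLindelofSp (X : Type u) [TopologicalSpace X] : Prop :=
  RegularSpace X ∧ T1Space X ∧ QuasiLindelofSp X

/-- X is productively Lindelöf if X × Y is Lindelöf for every Lindelöf space Y. -/
def ProductivelyLindelofSp (X : Type u) [TopologicalSpace X] : Prop :=
  ∀ (Y : Type u) [TopologicalSpace Y], EngLindelofSp Y → EngLindelofSp (X × Y)

/-- X is productively quasi-Lindelöf if X × Y is quasi-Lindelöf for every Lindelöf space Y. -/
def ProductivelyQuasiLindelofSp (X : Type u) [TopologicalSpace X] : Prop :=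
  ∀ (Y : Type u) [TopologicalSpace Y], EngLindelofSp Y → QuasiLindelofSp (X × Y)

/-- X is powerfully Lindelöf if X^ω is Lindelöf. -/
def PowerfullyLindelofSp (X : Type u) [TopologicalSpace X] : Prop :=
  EngLindelofSp (ℕ → X)

/-- X is powerfully quasi-Lindelöf if X^ω is quasi-Lindelöf. -/
def PowerfullyQuasiLindelofSp (X : Type u) [TopologicalSpace X] : Prop :=
  QuasiLindelofSp (ℕ → X)

/-- Tightness of X is at most κ. -/
def TightnessLE (X : Type u) [TopologicalSpace X] (κ : Cardinal.{u}) : Prop :=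
  ∀ (A : Set X) (x : X), x ∈ closure A → ∃ B ⊆ A, #B ≤ κ ∧ x ∈ closure B

/-- X has countable tightness. -/
def CountableTightness (X : Type u) [TopologicalSpace X] : Prop :=
  ∀ (A : Set X) (x : X), x ∈ closure A → ∃ B ⊆ A, B.Countable ∧ x ∈ closure B

/-- The Lindelöf number of X is at most κ: every open cover has a subcover of size ≤ κ. -/
def LindelofNumberLE (X : Type u) [TopologicalSpace X] (κ : Cardinal.{u}) : Prop :=
  ∀ 𝒰 : Set (Set X), (∀ U ∈ 𝒰, IsOpen U) → ⋃₀ 𝒰 = Set.univ →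
    ∃ 𝒱 ⊆ 𝒰, #𝒱 ≤ κ ∧ ⋃₀ 𝒱 = Set.univ

/-- The weight of X is at most κ: there is a base of size ≤ κ. -/
def WeightLE (X : Type u) [TopologicalSpace X] (κ : Cardinal.{u}) : Prop :=
  ∃ B : Set (Set X), TopologicalSpace.IsTopologicalBasis B ∧ #B ≤ κ

/-- N is a network for X. -/
def IsNetwork (X : Type u) [TopologicalSpace X] (N : Set (Set X)) : Prop :=
  ∀ (x : X) (U : Set X), IsOpen U → x ∈ U → ∃ n ∈ N, x ∈ n ∧ n ⊆ U

/-- X is linearly Lindelöf: regular (incl. T1) and every open cover linearly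
ordered by inclusion has a countable subcover. -/
def LinearlyLindelofSp (X : Type u) [TopologicalSpace X] : Prop :=
  RegularSpace X ∧ T1Space X ∧
    ∀ 𝒰 : Set (Set X), (∀ U ∈ 𝒰, IsOpen U) → IsChain (· ⊆ ·) 𝒰 → ⋃₀ 𝒰 = Set.univ →
      ∃ 𝒱 ⊆ 𝒰, 𝒱.Countable ∧ ⋃₀ 𝒱 = Set.univ

/-- U ⊆ X^ω is a basic open set: a product of open sets, all but finitely many of
which equal X. -/
def IsBasicOpen (X : Type u) [TopologicalSpace X] (U : Set (ℕ → X)) : Prop :=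
  ∃ V : ℕ → Set X, (∀ i, IsOpen (V i)) ∧ {i | V i ≠ Set.univ}.Finite ∧
    U = Set.pi Set.univ V

/-- A family of subsets of Z is point-κ if every point belongs to at most κ members. -/
def PointLE {Z : Type u} (𝒲 : Set (Set Z)) (κ : Cardinal.{u}) : Prop :=
  ∀ z : Z, #({W ∈ 𝒲 | z ∈ W}) ≤ κ

/-- A non-empty space is zero-dimensional if it is T1 and has a base of clopen sets. -/
def ZeroDimensionalSp (Y : Type u) [TopologicalSpace Y] : Prop :=
  Nonempty Y ∧ T1Space Y ∧
    ∃ B : Set (Set Y), TopologicalSpace.IsTopologicalBasis B ∧ ∀ b ∈ B, IsClopen b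

/-! Suppose an open cover `𝒰` has no subcover of size `≤ κ`. For every `A` with `|A| ≤ κ`,
regularity yields at most `2 ^ |A|` members of `𝒰` covering `cl A` (points whose closed
neighbourhoods have the same trace on `A` can share one), and the hypothesis applied to the
closed set `cl A` cuts them down to a family `Φ A` of size `≤ κ`. Choose `x α` for `α < κ⁺`
outside `⋃ Φ (x '' Iio β)` for all `β < α`. By tightness and the regularity of `κ⁺`,
`cl (range x)` is covered by the `≤ 2 ^ κ` sets of the families `Φ (x '' Iio β)`, hence by `κ` of
them, all drawn from stages below some `α`; but `x α` avoids these. -/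

def IsInitiallyLindelof (X : Type u) [TopologicalSpace X] (μ κ : Cardinal.{u}) : Prop :=
  ∀ 𝒰 : Set (Set X), (∀ U ∈ 𝒰, IsOpen U) → ⋃₀ 𝒰 = Set.univ →
    #𝒰 ≤ μ → ∃ 𝒱 ⊆ 𝒰, #𝒱 ≤ κ ∧ ⋃₀ 𝒱 = Set.univ

section Cofinal

theorem Cardinal.mk_iUnion_le_mul {α ι : Type u} {f : ι → Set α} {c : Cardinal.{u}}
    (hf : ∀ i, #(f i) ≤ c) : #(⋃ i, f i) ≤ #ι * c :=
  (mk_iUnion_le f).trans (mul_le_mul' le_rfl (ciSup_le' hf))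

variable {ι : Type u} [LinearOrder ι]

theorem exists_forall_lt_of_mk_lt_cof {s : Set ι} (hs : #s < Order.cof ι) :
    ∃ b, ∀ a ∈ s, a < b :=
  not_isCofinal_iff.1 fun hcof => (Order.cof_le hcof).not_gt hs

theorem exists_subset_biUnion_Iio_of_mk_lt_cof {Y : Type u} (f : ι → Set Y) {s : Set Y}
    (hs : s ⊆ ⋃ i, f i) (hcard : #s < Order.cof ι) : ∃ b, s ⊆ ⋃ i < b, f i := by
  choose idx hidx using fun y : s => mem_iUnion.1 (hs y.2)
  obtain ⟨b, hb⟩ := exists_forall_lt_of_mk_lt_cof (mk_range_le.trans_lt hcard : #(range idx) < _)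
  exact ⟨b, fun y hy => mem_iUnion₂.2 ⟨idx ⟨y, hy⟩, hb _ (mem_range_self _), hidx ⟨y, hy⟩⟩⟩

theorem exists_subset_image_Iio_of_mk_lt_cof {Y : Type u} (x : ι → Y) {s : Set Y}
    (hs : s ⊆ range x) (hcard : #s < Order.cof ι) : ∃ b, s ⊆ x '' Iio b := by
  rw [range_eq_iUnion] at hs
  simpa only [image_eq_iUnion, mem_Iio] using exists_subset_biUnion_Iio_of_mk_lt_cof _ hs hcard

end Cofinal

theorem WellFoundedLT.exists_fun_forall_of_forall_exists {ι α : Type*} [LT ι] [WellFoundedLT ι]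
    [Nonempty α] (P : ι → (ι → α) → α → Prop)
    (hP : ∀ i f g a, (∀ j < i, f j = g j) → P i f a → P i g a) (h : ∀ i f, ∃ a, P i f a) :
    ∃ x : ι → α, ∀ i, P i x (x i) := by
  classical
  choose c hc using h
  let x : ι → α := wellFounded_lt.fix fun i x' =>
    c i fun j => if hj : j < i then x' j hj else Classical.arbitrary α
  refine ⟨x, fun i => ?_⟩
  rw [show x i = _ from wellFounded_lt.fix_eq _ i]
  exact hP _ _ _ _ (fun j hj => dif_pos hj) (hc _ _)

section Covers

variable {X : Type u} [TopologicalSpace X]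

theorem mem_closure_inter_of_mem_nhds {A N : Set X} {x : X} (hx : x ∈ closure A)
    (hN : N ∈ 𝓝 x) : x ∈ closure (A ∩ N) := by
  rw [mem_closure_iff_nhdsWithin_neBot, nhdsWithin_inter_of_mem' (mem_nhdsWithin_of_mem_nhds hN)]
  exact mem_closure_iff_nhdsWithin_neBot.1 hx

theorem IsInitiallyLindelof.exists_subcover_of_isClosed {μ κ : Cardinal.{u}}
    (h : IsInitiallyLindelof X μ κ) (hμ : ℵ₀ ≤ μ) {F : Set X} (hF : IsClosed F)
    {𝒲 : Set (Set X)} (h𝒲 : ∀ W ∈ 𝒲, IsOpen W) (hF𝒲 : F ⊆ ⋃₀ 𝒲) (hcard : #𝒲 ≤ μ) :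
    ∃ 𝒱 ⊆ 𝒲, #𝒱 ≤ κ ∧ F ⊆ ⋃₀ 𝒱 := by
  have hopen : ∀ W ∈ insert Fᶜ 𝒲, IsOpen W := by
    rintro W (rfl | hW)
    exacts [hF.isOpen_compl, h𝒲 W hW]
  have hcov : ⋃₀ insert Fᶜ 𝒲 = Set.univ := by
    rw [sUnion_insert, ← compl_subset_iff_union, compl_compl]
    exact hF𝒲
  have hcard' : #(insert Fᶜ 𝒲 : Set (Set X)) ≤ μ :=
    (mk_insert_le.trans (add_le_add hcard le_rfl)).trans (add_one_of_aleph0_le hμ).le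
  obtain ⟨𝒱, h𝒱, h𝒱card, h𝒱cov⟩ := h _ hopen hcov hcard'
  refine ⟨𝒱 ∩ 𝒲, inter_subset_right, (mk_le_mk_of_subset inter_subset_left).trans h𝒱card, ?_⟩
  intro y hy
  obtain ⟨W, hW𝒱, hyW⟩ := h𝒱cov.symm.subset (mem_univ y)
  rcases h𝒱 hW𝒱 with rfl | hW𝒲
  exacts [absurd hy hyW, ⟨W, ⟨hW𝒱, hW𝒲⟩, hyW⟩]

theorem exists_subset_mk_le_two_pow_closure_subset_sUnion [RegularSpace X] {𝒰 : Set (Set X)}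
    (h𝒰 : ∀ U ∈ 𝒰, IsOpen U) {A : Set X} (hA : closure A ⊆ ⋃₀ 𝒰) :
    ∃ 𝒲 ⊆ 𝒰, #𝒲 ≤ 2 ^ #A ∧ closure A ⊆ ⋃₀ 𝒲 := by
  have hnbhd : ∀ x : closure A, ∃ U ∈ 𝒰, ∃ N ∈ 𝓝 x.1, IsClosed N ∧ N ⊆ U := fun x => by
    obtain ⟨U, hU𝒰, hxU⟩ := hA x.2
    exact ⟨U, hU𝒰, exists_mem_nhds_isClosed_subset ((h𝒰 U hU𝒰).mem_nhds hxU)⟩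
  choose U hU𝒰 N hN hNclosed hNU using hnbhd
  let trace : closure A → Set X := fun x => A ∩ N x
  let rep := rangeSplitting trace
  refine ⟨range (U ∘ rep), range_subset_iff.2 fun _ => hU𝒰 _, ?_, ?_⟩
  · calc #(range (U ∘ rep)) ≤ #(range trace) := mk_range_le
      _ ≤ #(𝒫 A) := mk_le_mk_of_subset (range_subset_iff.2 fun _ => inter_subset_left)
      _ = 2 ^ #A := mk_powerset A
  · intro y hy
    let T : range trace := ⟨trace ⟨y, hy⟩, mem_range_self _⟩
    have hy' : y ∈ closure (trace (rep T)) := by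
      rw [apply_rangeSplitting trace]
      exact mem_closure_inter_of_mem_nhds hy (hN ⟨y, hy⟩)
    refine ⟨U (rep T), mem_range_self T, hNU _ ?_⟩
    exact closure_minimal inter_subset_right (hNclosed _) hy'

theorem IsInitiallyLindelof.exists_subset_mk_le_closure_subset_sUnion [RegularSpace X]
    {κ : Cardinal.{u}} (h : IsInitiallyLindelof X (2 ^ κ) κ) (hκ : ℵ₀ ≤ κ) {𝒰 : Set (Set X)}
    (h𝒰 : ∀ U ∈ 𝒰, IsOpen U) {A : Set X} (hA𝒰 : closure A ⊆ ⋃₀ 𝒰) (hA : #A ≤ κ) :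
    ∃ 𝒱 ⊆ 𝒰, #𝒱 ≤ κ ∧ closure A ⊆ ⋃₀ 𝒱 := by
  obtain ⟨𝒲, h𝒲𝒰, h𝒲card, h𝒲⟩ := exists_subset_mk_le_two_pow_closure_subset_sUnion h𝒰 hA𝒰
  obtain ⟨𝒱, h𝒱𝒲, h𝒱, h𝒱cov⟩ := h.exists_subcover_of_isClosed (hκ.trans (cantor κ).le)
    isClosed_closure (fun W hW => h𝒰 W (h𝒲𝒰 hW)) h𝒲
    (h𝒲card.trans (power_le_power_left two_ne_zero hA))
  exact ⟨𝒱, h𝒱𝒲.trans h𝒲𝒰, h𝒱, h𝒱cov⟩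

end Covers

theorem exists_seq_notMem_sUnion_image_Iio {X ι : Type u} [LinearOrder ι] [WellFoundedLT ι]
    {κ : Cardinal.{u}} (hκ : ℵ₀ ≤ κ) (hIio : ∀ i : ι, #(Iio i) ≤ κ)
    {𝒰 : Set (Set X)} (hno : ∀ 𝒱 ⊆ 𝒰, #𝒱 ≤ κ → ⋃₀ 𝒱 ≠ Set.univ)
    (Φ : Set X → Set (Set X)) (hΦ𝒰 : ∀ A, Φ A ⊆ 𝒰) (hΦ : ∀ A, #(Φ A) ≤ κ) :
    ∃ x : ι → X, ∀ i, ∀ j < i, x i ∉ ⋃₀ Φ (x '' Iio j) := by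
  have : Nonempty X := by
    obtain ⟨p, -⟩ := (ne_univ_iff_exists_notMem _).1 (hno ∅ (empty_subset _) (by simp))
    exact ⟨p⟩
  refine WellFoundedLT.exists_fun_forall_of_forall_exists
    (fun i g p => ∀ j < i, p ∉ ⋃₀ Φ (g '' Iio j)) ?_ ?_
  · intro i f g p hfg hp j hj
    rw [← image_congr (s := Iio j) fun k hk => hfg k (lt_trans hk hj)]
    exact hp j hj
  · intro i g
    have hsub : (⋃ j : Iio i, Φ (g '' Iio j)) ⊆ 𝒰 := iUnion_subset fun j => hΦ𝒰 _
    have hcard : #(⋃ j : Iio i, Φ (g '' Iio j)) ≤ κ :=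
      (mk_iUnion_le_mul fun j => hΦ _).trans
        ((mul_le_mul' (hIio i) le_rfl).trans (mul_eq_self hκ).le)
    obtain ⟨p, hp⟩ := (ne_univ_iff_exists_notMem _).1 (hno _ hsub hcard)
    exact ⟨p, fun j hj hmem => hp (sUnion_mono (subset_iUnion_of_subset ⟨j, hj⟩ subset_rfl) hmem)⟩

theorem lindelofNumberLE_of_isInitiallyLindelof {X ι : Type u} [TopologicalSpace X]
    [RegularSpace X] [LinearOrder ι] [WellFoundedLT ι] {κ : Cardinal.{u}} (hκ : ℵ₀ ≤ κ)
    (hIio : ∀ i : ι, #(Iio i) ≤ κ) (hcof : κ < Order.cof ι) (hι : #ι ≤ 2 ^ κ)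
    (ht : TightnessLE X κ) (h : IsInitiallyLindelof X (2 ^ κ) κ) : LindelofNumberLE X κ := by
  intro 𝒰 h𝒰 hcov
  by_contra! hno
  have hΦ : ∀ A : Set X, ∃ 𝒱 ⊆ 𝒰, #𝒱 ≤ κ ∧ (#A ≤ κ → closure A ⊆ ⋃₀ 𝒱) := fun A => by
    by_cases hA : #A ≤ κ
    · obtain ⟨𝒱, h𝒱𝒰, h𝒱, h𝒱cov⟩ := h.exists_subset_mk_le_closure_subset_sUnion hκ h𝒰
        (hcov.symm ▸ subset_univ _) hA
      exact ⟨𝒱, h𝒱𝒰, h𝒱, fun _ => h𝒱cov⟩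
    · exact ⟨∅, empty_subset _, by simp, fun h => absurd h hA⟩
  choose Φ hΦ𝒰 hΦcard hΦcl using hΦ
  obtain ⟨x, hx⟩ := exists_seq_notMem_sUnion_image_Iio hκ hIio hno Φ hΦ𝒰 hΦcard
  have hcl : closure (range x) ⊆ ⋃₀ ⋃ i, Φ (x '' Iio i) := by
    intro y hy
    obtain ⟨B, hBx, hBκ, hyB⟩ := ht _ y hy
    obtain ⟨i, hi⟩ := exists_subset_image_Iio_of_mk_lt_cof x hBx (hBκ.trans_lt hcof)
    exact sUnion_mono (subset_iUnion _ i)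
      (hΦcl _ (mk_image_le.trans (hIio i)) (closure_mono hi hyB))
  have hcard : #(⋃ i, Φ (x '' Iio i)) ≤ 2 ^ κ :=
    (mk_iUnion_le_mul fun i => hΦcard _).trans <|
      (mul_le_mul' hι (cantor κ).le).trans (mul_eq_self (hκ.trans (cantor κ).le)).le
  obtain ⟨𝒱, h𝒱, h𝒱κ, h𝒱cov⟩ := h.exists_subcover_of_isClosed (hκ.trans (cantor κ).le)
    isClosed_closure (fun W hW => h𝒰 W (iUnion_subset (fun i => hΦ𝒰 _) hW)) hcl hcard
  obtain ⟨i, hi⟩ :=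
    exists_subset_biUnion_Iio_of_mk_lt_cof (fun i => Φ (x '' Iio i)) h𝒱 (h𝒱κ.trans_lt hcof)
  obtain ⟨W, hW𝒱, hxW⟩ := h𝒱cov (subset_closure (mem_range_self i))
  obtain ⟨j, hj, hWj⟩ := mem_iUnion₂.1 (hi hW𝒱)
  exact hx i j hj ⟨W, hWj, hxW⟩

theorem stmt7_general (X : Type u) [TopologicalSpace X] (κ : Cardinal.{u}) (hκ : ℵ₀ ≤ κ)
    (hreg : RegularSpace X) (ht : TightnessLE X κ)
    (hsmall : ∀ 𝒰 : Set (Set X), (∀ U ∈ 𝒰, IsOpen U) → ⋃₀ 𝒰 = Set.univ →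
      #𝒰 ≤ 2 ^ κ → ∃ 𝒱 ⊆ 𝒰, #𝒱 ≤ κ ∧ ⋃₀ 𝒱 = Set.univ) :
    LindelofNumberLE X κ :=
  lindelofNumberLE_of_isInitiallyLindelof (ι := (Order.succ κ).ord.ToType) hκ
    (fun i => Order.lt_succ_iff.1 (by simpa using mk_Iio_lt i))
    (by rw [Ordinal.cof_toType, (isRegular_succ hκ).cof_ord]; exact Order.lt_succ κ)
    (by rw [mk_ord_toType]; exact Order.succ_le_of_lt (cantor κ)) ht hsmall

/-- Let κ be infinite and X a regular space with t(X) ≤ κ such that every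
open cover of size at most 2^κ has a subcover of size at most κ. Then ℓ(X) ≤ κ. -/
theorem stmt7 (X : Type u) [TopologicalSpace X] (κ : Cardinal.{u}) (hκ : ℵ₀ ≤ κ)
    (hreg : RegularSpace X) (ht1 : T1Space X) (ht : TightnessLE X κ)
    (hsmall : ∀ 𝒰 : Set (Set X), (∀ U ∈ 𝒰, IsOpen U) → ⋃₀ 𝒰 = Set.univ →
      #𝒰 ≤ 2 ^ κ → ∃ 𝒱 ⊆ 𝒰, #𝒱 ≤ κ ∧ ⋃₀ 𝒱 = Set.univ) :
    LindelofNumberLE X κ :=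
  stmt7_general X κ hκ hreg ht hsmall
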